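/- Every Boolean function computable by a fan-in-2 Boolean circuit (with AND, OR, NOT gates) of depth d can be computed by a width-5 permutation branching program of length at most 4^d. -/

import Mathlib

inductive Circuit (n : ℕ) where
  | var : Fin n → Circuit n
  | not : Circuit n → Circuit n
  | and : Circuit n → Circuit n → Circuit n
  | or  : Circuit n → Circuit n → Circuit n

def Circuit.eval {n : ℕ} : Circuit n → (Fin n → Bool) → Bool
  | var i, x => x i
  | not c, x => !(c.eval x)
  | and c d, x => c.eval x && d.eval x
  | or c d, x => c.eval x || d.eval x

/-- Depth: variables have depth 0, NOT does not increase depth,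
AND/OR add one to the max of the children's depths. -/
def Circuit.depth {n : ℕ} : Circuit n → ℕ
  | var _ => 0
  | not c => c.depth
  | and c d => max c.depth d.depth + 1
  | or c d => max c.depth d.depth + 1

/-- A width-5 permutation branching program: a list of instructions `(i, π, ρ)`. -/
def BP (n : ℕ) := List (Fin n × Equiv.Perm (Fin 5) × Equiv.Perm (Fin 5))

def BP.eval {n : ℕ} (P : BP n) (x : Fin n → Bool) : Equiv.Perm (Fin 5) :=
  (P.map (fun ins => if x ins.1 then ins.2.1 else ins.2.2)).prod

def IsFiveCycle (σ : Equiv.Perm (Fin 5)) : Prop := σ.IsCycle ∧ σ.support.card = 5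

lemma IsFiveCycle.inv {σ : Equiv.Perm (Fin 5)} (h : IsFiveCycle σ) : IsFiveCycle σ⁻¹ :=
  ⟨h.1.inv, by rw [Equiv.Perm.support_inv]; exact h.2⟩

lemma IsFiveCycle.conj {σ τ : Equiv.Perm (Fin 5)} (h : IsFiveCycle σ) :
    IsFiveCycle (τ * σ * τ⁻¹) :=
  ⟨h.1.conj, by rw [Equiv.Perm.card_support_conj]; exact h.2⟩

namespace Barr

def Computes {n : ℕ} (P : BP n) (b : (Fin n → Bool) → Bool) (σ : Equiv.Perm (Fin 5)) : Prop :=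
  ∀ x, P.eval x = if b x then σ else 1

lemma eval_cons {n : ℕ} (a : Fin n × Equiv.Perm (Fin 5) × Equiv.Perm (Fin 5))
    (P : List (Fin n × Equiv.Perm (Fin 5) × Equiv.Perm (Fin 5))) (x : Fin n → Bool) :
    BP.eval (a :: P) x = (if x a.1 then a.2.1 else a.2.2) * BP.eval P x := by
  simp [BP.eval]

/-- Concatenation of branching programs. -/
def app {n : ℕ} (P Q : BP n) : BP n := List.append P Q

lemma app_eval {n : ℕ} (P Q : BP n) (x : Fin n → Bool) :
    (app P Q).eval x = P.eval x * Q.eval x := by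
  unfold app BP.eval
  exact (congrArg List.prod List.map_append).trans List.prod_append

lemma app_length {n : ℕ} (P Q : BP n) :
    (app P Q).length = P.length + Q.length := by
  exact List.length_append

lemma app_ne_nil {n : ℕ} {P : BP n} (Q : BP n) (h : P ≠ []) : app P Q ≠ [] := by
  intro hc
  exact h (List.append_eq_nil_iff.mp hc).1

/-- Multiply the last instruction of a program (both branches) on the right by `τ`. -/
def mulLast {n : ℕ} : BP n → Equiv.Perm (Fin 5) → BP n
  | [], _ => []
  | [a], τ => [(a.1, a.2.1 * τ, a.2.2 * τ)]
  | a :: b :: P, τ => a :: mulLast (b :: P) τ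

lemma mulLast_length {n : ℕ} (τ : Equiv.Perm (Fin 5)) :
    ∀ P : BP n, (mulLast P τ).length = P.length
  | [] => rfl
  | [_] => rfl
  | a :: b :: P => by
      show (a :: mulLast (b :: P) τ).length = _
      exact congrArg (· + 1) (mulLast_length τ (b :: P))

lemma mulLast_ne_nil {n : ℕ} (τ : Equiv.Perm (Fin 5)) {P : BP n} (h : P ≠ []) :
    mulLast P τ ≠ [] := by
  intro hc
  have := mulLast_length τ P
  rw [hc] at this
  exact h (List.length_eq_zero_iff.mp this.symm)

lemma mulLast_eval {n : ℕ} (τ : Equiv.Perm (Fin 5)) (x : Fin n → Bool) :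
    ∀ P : BP n, P ≠ [] → BP.eval (mulLast P τ) x = BP.eval P x * τ
  | [], h => absurd rfl h
  | [a], _ => by
      show BP.eval [(a.1, a.2.1 * τ, a.2.2 * τ)] x = _
      simp only [BP.eval, List.map_cons, List.map_nil, List.prod_cons, List.prod_nil, mul_one]
      split <;> rfl
  | a :: b :: P, _ => by
      show BP.eval (a :: mulLast (b :: P) τ) x = BP.eval (a :: b :: P) x * τ
      exact (eval_cons a _ x).trans ((congrArg ((if x a.1 then a.2.1 else a.2.2) * ·)
        (mulLast_eval τ x (b :: P) (List.cons_ne_nil _ _))).trans ((mul_assoc _ _ _).symm.trans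
        (congrArg (· * τ) (eval_cons a (b :: P) x).symm)))

lemma computes_not {n : ℕ} {P : BP n} {b : (Fin n → Bool) → Bool} {σ : Equiv.Perm (Fin 5)}
    (hP : P ≠ []) (h : Computes P b σ) :
    Computes (mulLast P σ⁻¹) (fun x => !b x) σ⁻¹ := by
  intro x
  rw [mulLast_eval _ _ _ hP, h x]
  cases hb : b x <;> simp [hb]

lemma computes_and {n : ℕ} {P₁ P₂ P₃ P₄ : BP n} {b₁ b₂ : (Fin n → Bool) → Bool}
    {α β : Equiv.Perm (Fin 5)}
    (h₁ : Computes P₁ b₁ α) (h₂ : Computes P₂ b₂ β)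
    (h₃ : Computes P₃ b₁ α⁻¹) (h₄ : Computes P₄ b₂ β⁻¹) :
    Computes (app (app (app P₁ P₂) P₃) P₄) (fun x => b₁ x && b₂ x) (α * β * α⁻¹ * β⁻¹) := by
  intro x
  rw [app_eval, app_eval, app_eval, h₁ x, h₂ x, h₃ x, h₄ x]
  cases hb₁ : b₁ x <;> cases hb₂ : b₂ x <;> simp [hb₁, hb₂]

lemma isFiveCycle_formPerm {l : List (Fin 5)} (h : l.Nodup) (h5 : l.length = 5) :
    IsFiveCycle l.formPerm := by
  have hx : ∀ x : Fin 5, l ≠ [x] := by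
    intro x hc; rw [hc] at h5; simp at h5
  refine ⟨List.isCycle_formPerm h (by omega), ?_⟩
  rw [List.support_formPerm_of_nodup l h hx, List.card_toFinset, h.dedup, h5]

def α₀ : Equiv.Perm (Fin 5) := ([0,1,2,3,4] : List (Fin 5)).formPerm
def β₀ : Equiv.Perm (Fin 5) := ([0,2,4,3,1] : List (Fin 5)).formPerm
def γ₀ : Equiv.Perm (Fin 5) := α₀ * β₀ * α₀⁻¹ * β₀⁻¹

lemma hα₀ : IsFiveCycle α₀ := isFiveCycle_formPerm (by decide) rfl
lemma hβ₀ : IsFiveCycle β₀ := isFiveCycle_formPerm (by decide) rfl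
lemma γ₀_eq : γ₀ = ([0,3,2,4,1] : List (Fin 5)).formPerm := by decide
lemma hγ₀ : IsFiveCycle γ₀ := γ₀_eq ▸ isFiveCycle_formPerm (by decide) rfl

/-- Conjugate the standard commutator pair to hit an arbitrary target 5-cycle. -/
lemma exists_comm_pair {σ : Equiv.Perm (Fin 5)} (hσ : IsFiveCycle σ) :
    ∃ α β : Equiv.Perm (Fin 5), IsFiveCycle α ∧ IsFiveCycle β ∧ α * β * α⁻¹ * β⁻¹ = σ := by
  have hconj : IsConj γ₀ σ := hγ₀.1.isConj hσ.1 (hγ₀.2.trans hσ.2.symm)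
  obtain ⟨t, ht⟩ := isConj_iff.mp hconj
  refine ⟨t * α₀ * t⁻¹, t * β₀ * t⁻¹, hα₀.conj, hβ₀.conj, ?_⟩
  have h2 : (t * α₀ * t⁻¹) * (t * β₀ * t⁻¹) * (t * α₀ * t⁻¹)⁻¹ * (t * β₀ * t⁻¹)⁻¹
      = t * γ₀ * t⁻¹ := by
    simp only [γ₀]; group
  rw [h2, ht]

lemma master {n : ℕ} (C : Circuit n) (σ : Equiv.Perm (Fin 5)) (hσ : IsFiveCycle σ) :
    ∃ P : BP n, P ≠ [] ∧ P.length ≤ 4 ^ C.depth ∧ Computes P C.eval σ := by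
  induction C generalizing σ with
  | var i =>
      refine ⟨[(i, σ, 1)], List.cons_ne_nil _ _, by simp [Circuit.depth], ?_⟩
      intro x
      simp [BP.eval, Circuit.eval]
      rfl
  | not c ih =>
      obtain ⟨P, hne, hlen, hc⟩ := ih σ⁻¹ hσ.inv
      refine ⟨mulLast P σ, mulLast_ne_nil _ hne, ?_, ?_⟩
      · rw [mulLast_length]; exact hlen
      · have h2 := computes_not hne hc
        rw [inv_inv] at h2
        intro x
        rw [h2 x]
        simp [Circuit.eval]
  | and c d ihc ihd =>
      obtain ⟨α, β, hα, hβ, hcm⟩ := exists_comm_pair hσ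
      obtain ⟨P₁, h₁n, h₁l, h₁⟩ := ihc α hα
      obtain ⟨P₂, h₂n, h₂l, h₂⟩ := ihd β hβ
      obtain ⟨P₃, h₃n, h₃l, h₃⟩ := ihc α⁻¹ hα.inv
      obtain ⟨P₄, h₄n, h₄l, h₄⟩ := ihd β⁻¹ hβ.inv
      refine ⟨app (app (app P₁ P₂) P₃) P₄, app_ne_nil _ (app_ne_nil _ (app_ne_nil _ h₁n)), ?_, ?_⟩
      · have e1 : P₁.length ≤ 4 ^ (max c.depth d.depth) :=
          h₁l.trans (Nat.pow_le_pow_right (by norm_num) (le_max_left _ _))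
        have e2 : P₂.length ≤ 4 ^ (max c.depth d.depth) :=
          h₂l.trans (Nat.pow_le_pow_right (by norm_num) (le_max_right _ _))
        have e3 : P₃.length ≤ 4 ^ (max c.depth d.depth) :=
          h₃l.trans (Nat.pow_le_pow_right (by norm_num) (le_max_left _ _))
        have e4 : P₄.length ≤ 4 ^ (max c.depth d.depth) :=
          h₄l.trans (Nat.pow_le_pow_right (by norm_num) (le_max_right _ _))
        show _ ≤ 4 ^ (max c.depth d.depth + 1)
        rw [app_length, app_length, app_length, pow_succ]
        omega
      · have h2 := computes_and h₁ h₂ h₃ h₄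
        rw [hcm] at h2
        intro x
        rw [h2 x]
        rfl
  | or c d ihc ihd =>
      obtain ⟨α, β, hα, hβ, hcm⟩ := exists_comm_pair hσ.inv
      obtain ⟨P₁, h₁n, h₁l, h₁⟩ := ihc α⁻¹ hα.inv
      obtain ⟨P₂, h₂n, h₂l, h₂⟩ := ihd β⁻¹ hβ.inv
      obtain ⟨P₃, h₃n, h₃l, h₃⟩ := ihc α hα
      obtain ⟨P₄, h₄n, h₄l, h₄⟩ := ihd β hβ
      have q₁ := computes_not h₁n h₁
      have q₂ := computes_not h₂n h₂
      have q₃ := computes_not h₃n h₃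
      have q₄ := computes_not h₄n h₄
      rw [inv_inv] at q₁ q₂
      have hand := computes_and q₁ q₂ q₃ q₄
      rw [hcm] at hand
      set R : BP n := app (app (app (mulLast P₁ α) (mulLast P₂ β)) (mulLast P₃ α⁻¹))
        (mulLast P₄ β⁻¹) with hR
      have hRn : R ≠ [] :=
        app_ne_nil _ (app_ne_nil _ (app_ne_nil _ (mulLast_ne_nil _ h₁n)))
      have hfin := computes_not hRn hand
      rw [inv_inv] at hfin
      refine ⟨mulLast R σ, mulLast_ne_nil _ hRn, ?_, ?_⟩
      · have e1 : (mulLast P₁ α).length ≤ 4 ^ (max c.depth d.depth) := by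
          rw [mulLast_length]
          exact h₁l.trans (Nat.pow_le_pow_right (by norm_num) (le_max_left _ _))
        have e2 : (mulLast P₂ β).length ≤ 4 ^ (max c.depth d.depth) := by
          rw [mulLast_length]
          exact h₂l.trans (Nat.pow_le_pow_right (by norm_num) (le_max_right _ _))
        have e3 : (mulLast P₃ α⁻¹).length ≤ 4 ^ (max c.depth d.depth) := by
          rw [mulLast_length]
          exact h₃l.trans (Nat.pow_le_pow_right (by norm_num) (le_max_left _ _))
        have e4 : (mulLast P₄ β⁻¹).length ≤ 4 ^ (max c.depth d.depth) := by
          rw [mulLast_length]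
          exact h₄l.trans (Nat.pow_le_pow_right (by norm_num) (le_max_right _ _))
        show _ ≤ 4 ^ (max c.depth d.depth + 1)
        rw [mulLast_length, hR, app_length, app_length, app_length, pow_succ]
        omega
      · intro x
        rw [hfin x]
        show _ = if (c.eval x || d.eval x) then σ else 1
        cases hc : c.eval x <;> cases hd : d.eval x <;> simp [hc, hd]

end Barr

/-- Barrington's theorem (length bound `4 ^ depth`). -/
theorem stmt_5 {n : ℕ} (C : Circuit n) :
    ∃ (P : BP n) (σ : Equiv.Perm (Fin 5)), IsFiveCycle σ ∧
      P.length ≤ 4 ^ C.depth ∧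
      ∀ x, P.eval x = if C.eval x then σ else 1 := by
  obtain ⟨P, _, hlen, hc⟩ := Barr.master C Barr.α₀ Barr.hα₀
  exact ⟨P, Barr.α₀, Barr.hα₀, hlen, hc⟩
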